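/- Let Ψ : ℝ^d → ℝ be continuously differentiable and let φ : ℝ^d × U → ℝ^d be such that for each θ, E_{u∼P_θ}[φ(θ,u)] = ∇Ψ(θ). Define λ̃_j(θ,ν) = E_{u∼P_θ}[max(ν_j · φ_j(θ,u), 0)] for ν ∈ {−1,1}^d. Then for every θ, ν, and j, λ̃_j(θ,ν) − λ̃_j(θ, S_j(ν)) = ν_j · ∂Ψ(θ)/∂θ_j, where S_j(ν) flips the sign of the j-th coordinate of ν and leaves other coordinates unchanged. -/
import Mathlib

open MeasureTheory

/-- Effective switching rates built from unbiased gradient estimates satisfy the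
zig-zag condition: if `E_{u∼P_θ}[φ(θ,u)] = ∇Ψ(θ)` and
`λ̃_j(θ,ν) = E_{u∼P_θ}[max(ν_j · φ_j(θ,u), 0)]`, then for every `θ`, `ν ∈ {−1,1}^d`
and `j`, `λ̃_j(θ,ν) − λ̃_j(θ, S_j(ν)) = ν_j · ∂Ψ(θ)/∂θ_j`. -/
theorem zigzag_effective_switching_rates {d : ℕ} {U : Type*} [MeasurableSpace U]
    (Ψ : (Fin d → ℝ) → ℝ) (hΨ : ContDiff ℝ 1 Ψ)
    (P : (Fin d → ℝ) → Measure U) (hP : ∀ θ, IsProbabilityMeasure (P θ))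
    (φ : (Fin d → ℝ) → U → Fin d → ℝ)
    (hφint : ∀ θ j, Integrable (fun u => φ θ u j) (P θ))
    (hunbiased : ∀ θ (j : Fin d),
      (∫ u, φ θ u j ∂(P θ)) = fderiv ℝ Ψ θ (Pi.single j 1)) :
    ∀ (θ : Fin d → ℝ) (νv : Fin d → ℝ), (∀ j, νv j = -1 ∨ νv j = 1) →
      ∀ j : Fin d,
        (∫ u, max (νv j * φ θ u j) 0 ∂(P θ)) -
            (∫ u, max ((Function.update νv j (-(νv j))) j * φ θ u j) 0 ∂(P θ)) =
          νv j * fderiv ℝ Ψ θ (Pi.single j 1) := by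
  intro θ νv hν j
  simp only [Function.update_self]
  have h1 : Integrable (fun u => max (νv j * φ θ u j) 0) (P θ) :=
    ((hφint θ j).const_mul _).sup (integrable_const 0)
  have h2 : Integrable (fun u => max (-(νv j) * φ θ u j) 0) (P θ) :=
    ((hφint θ j).const_mul _).sup (integrable_const 0)
  rw [← integral_sub h1 h2]
  have : ∀ u, max (νv j * φ θ u j) 0 - max (-(νv j) * φ θ u j) 0 = νv j * φ θ u j := by
    intro u
    rcases le_total (νv j * φ θ u j) 0 with h | h
    · rw [max_eq_right h, max_eq_left (by linarith [neg_mul (νv j) (φ θ u j)] : 0 ≤ -(νv j) * φ θ u j)]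
      simp [neg_mul]
    · rw [max_eq_left h, max_eq_right (by rw [neg_mul]; linarith : -(νv j) * φ θ u j ≤ 0)]
      ring
  simp only [this]
  rw [integral_const_mul, hunbiased]
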